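/- Let u be a C^1 function on the cylinder C = [0,1] × T, T = R/2πZ, and let κ : T → R be continuous with 0 < h < h₀ < 1/‖κ‖_∞. Define the weighted norms ‖u‖²_{Λ⁰L²_m} = ∫₀¹∫₀^{2π} h(1+hηκ(θ))|u|² dθ dη and ‖du‖²_{Λ¹L²_m} = ∫₀¹∫₀^{2π} ( (1+hηκ)/h |∂_η u|² + h/(1+hηκ) |∂_θ u|² ) dθ dη. Then there exists a constant C > 0 independent of h and u such that ‖u‖²_{Λ⁰L²_m} ≤ C ( ‖du‖²_{Λ¹L²_m} + ∫₀^{2π} |u(0,θ)|² dθ ). -/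

import Mathlib

/-!
For fixed `θ`, the fundamental theorem of calculus in `η` and Cauchy–Schwarz give
`‖u η θ‖² ≤ 2 ‖u 0 θ‖² + 2 ∫₀¹ ‖∂_η u (s, θ)‖² ds`, which integrates to an unweighted
Poincaré–trace inequality on the cylinder. Since `|h η κ θ| ≤ h₀ M < 1`, the weight
`h (1 + h η κ)` is at most `2 h₀` and `(1 + h η κ) / h` is at least `(1 - h₀ M) / h₀`, so the
weighted norms compare with the unweighted ones with constants independent of `h`.
-/

open Real MeasureTheory intervalIntegral Set Function

theorem sq_intervalIntegral_le {g : ℝ → ℝ} {a b : ℝ} (hab : a ≤ b)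
    (hg : IntervalIntegrable g volume a b)
    (hg2 : IntervalIntegrable (fun s => g s ^ 2) volume a b) :
    (∫ s in a..b, g s) ^ 2 ≤ (b - a) * ∫ s in a..b, g s ^ 2 := by
  set A := ∫ s in a..b, g s
  set B := ∫ s in a..b, g s ^ 2
  have hquad : ∀ t : ℝ, 0 ≤ (b - a) * (t * t) + (-2 * A) * t + B := fun t => calc
    0 ≤ ∫ s in a..b, (t - g s) ^ 2 := integral_nonneg hab fun _ _ => sq_nonneg _
    _ = ∫ s in a..b, (t * t + (-2 * t) * g s + g s ^ 2) := by congr! 2; ring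
    _ = (b - a) * (t * t) + (-2 * A) * t + B := by
      rw [integral_add (intervalIntegrable_const.add (hg.const_mul _)) hg2,
        integral_add intervalIntegrable_const (hg.const_mul _), intervalIntegral.integral_const,
        intervalIntegral.integral_const_mul, smul_eq_mul]
      ring
  have := discrim_le_zero hquad
  rw [discrim] at this
  linarith

variable {E : Type*} [NormedAddCommGroup E]

theorem sq_norm_le_of_contDiff [NormedSpace ℝ E] [CompleteSpace E] {f : ℝ → E} (hf : ContDiff ℝ 1 f)
    {a x b : ℝ} (hax : a ≤ x) (hxb : x ≤ b) :
    ‖f x‖ ^ 2 ≤ 2 * ‖f a‖ ^ 2 + 2 * (b - a) * ∫ s in a..b, ‖deriv f s‖ ^ 2 := by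
  have hf' : Continuous fun s => ‖deriv f s‖ := (hf.continuous_deriv le_rfl).norm
  have hftc : f x = f a + ∫ s in a..x, deriv f s := by
    rw [integral_deriv_eq_sub (fun s _ => (hf.differentiable one_ne_zero).differentiableAt)
      ((hf.continuous_deriv le_rfl).intervalIntegrable _ _), add_sub_cancel]
  have hJ : ‖∫ s in a..x, deriv f s‖ ^ 2 ≤ (b - a) * ∫ s in a..b, ‖deriv f s‖ ^ 2 := calc
    ‖∫ s in a..x, deriv f s‖ ^ 2 ≤ (∫ s in a..x, ‖deriv f s‖) ^ 2 := by
      gcongr; exact norm_integral_le_integral_norm hax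
    _ ≤ (x - a) * ∫ s in a..x, ‖deriv f s‖ ^ 2 :=
      sq_intervalIntegral_le hax (hf'.intervalIntegrable _ _) ((hf'.pow 2).intervalIntegrable _ _)
    _ ≤ (b - a) * ∫ s in a..b, ‖deriv f s‖ ^ 2 := by
      gcongr
      · exact integral_nonneg hax fun _ _ => sq_nonneg _
      · linarith
      · exact integral_mono_interval le_rfl hax hxb (.of_forall fun _ => sq_nonneg _)
          ((hf'.pow 2).intervalIntegrable _ _)
  calc ‖f x‖ ^ 2 ≤ (‖f a‖ + ‖∫ s in a..x, deriv f s‖) ^ 2 := by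
        rw [hftc]; gcongr; exact norm_add_le _ _
    _ ≤ 2 * ‖f a‖ ^ 2 + 2 * ‖∫ s in a..x, deriv f s‖ ^ 2 := by
        nlinarith [sq_nonneg (‖f a‖ - ‖∫ s in a..x, deriv f s‖)]
    _ ≤ _ := by linarith

section Slices

variable [NormedSpace ℝ E] {u : ℝ → ℝ → E}

theorem ContDiff.continuous_deriv_slice_fst (hu : ContDiff ℝ 1 (uncurry u)) :
    Continuous fun p : ℝ × ℝ => deriv (fun s => u s p.2) p.1 := by
  have hderiv : ∀ p : ℝ × ℝ,
      deriv (fun s => u s p.2) p.1 = fderiv ℝ (uncurry u) p (1, 0) := fun p =>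
    (((hu.differentiable one_ne_zero p).hasFDerivAt.comp_hasDerivAt p.1
      ((hasDerivAt_id' p.1).prodMk (hasDerivAt_const p.1 p.2)) :)).deriv
  simpa only [hderiv] using (hu.continuous_fderiv one_ne_zero).clm_apply continuous_const

theorem ContDiff.continuous_deriv_slice_snd (hu : ContDiff ℝ 1 (uncurry u)) :
    Continuous fun p : ℝ × ℝ => deriv (u p.1) p.2 := by
  have hderiv : ∀ p : ℝ × ℝ, deriv (u p.1) p.2 = fderiv ℝ (uncurry u) p (0, 1) := fun p =>
    (((hu.differentiable one_ne_zero p).hasFDerivAt.comp_hasDerivAt p.2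
      ((hasDerivAt_const p.2 p.1).prodMk (hasDerivAt_id' p.2)) :)).deriv
  simpa only [hderiv] using (hu.continuous_fderiv one_ne_zero).clm_apply continuous_const

theorem ContDiff.slice_fst (hu : ContDiff ℝ 1 (uncurry u)) (θ : ℝ) :
    ContDiff ℝ 1 fun s => u s θ :=
  hu.comp (contDiff_id.prodMk contDiff_const)

end Slices

section Rectangle

variable {a b c d : ℝ}

theorem ContinuousOn.integrableOn_Ioc_prod_Ioc {F : ℝ × ℝ → E}
    (hF : ContinuousOn F (Icc a b ×ˢ Icc c d)) : IntegrableOn F (Ioc a b ×ˢ Ioc c d) :=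
  (hF.integrableOn_compact (isCompact_Icc.prod isCompact_Icc)).mono_set
    (prod_mono Ioc_subset_Icc_self Ioc_subset_Icc_self)

theorem integral_integral_eq_setIntegral_prod [NormedSpace ℝ E] {F : ℝ → ℝ → E}
    (hab : a ≤ b) (hcd : c ≤ d) (hF : ContinuousOn (uncurry F) (Icc a b ×ˢ Icc c d)) :
    ∫ x in a..b, ∫ y in c..d, F x y = ∫ p in Ioc a b ×ˢ Ioc c d, uncurry F p := by
  rw [Measure.volume_eq_prod, setIntegral_prod _ hF.integrableOn_Ioc_prod_Ioc,
    integral_of_le hab]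
  simp_rw [integral_of_le hcd]
  rfl

theorem integral_integral_swap_of_continuousOn [NormedSpace ℝ E] {F : ℝ → ℝ → E}
    (hab : a ≤ b) (hcd : c ≤ d) (hF : ContinuousOn (uncurry F) (Icc a b ×ˢ Icc c d)) :
    ∫ x in a..b, ∫ y in c..d, F x y = ∫ y in c..d, ∫ x in a..b, F x y := by
  have hint : Integrable (uncurry F)
      ((volume.restrict (Ioc a b)).prod (volume.restrict (Ioc c d))) := by
    rw [Measure.prod_restrict]
    exact hF.integrableOn_Ioc_prod_Ioc
  simp_rw [integral_of_le hab, integral_of_le hcd]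
  exact integral_integral_swap hint

theorem integral_integral_mono_on {F G : ℝ → ℝ → ℝ} (hab : a ≤ b) (hcd : c ≤ d)
    (hF : ContinuousOn (uncurry F) (Icc a b ×ˢ Icc c d))
    (hG : ContinuousOn (uncurry G) (Icc a b ×ˢ Icc c d))
    (hFG : ∀ x ∈ Icc a b, ∀ y ∈ Icc c d, F x y ≤ G x y) :
    ∫ x in a..b, ∫ y in c..d, F x y ≤ ∫ x in a..b, ∫ y in c..d, G x y := by
  rw [integral_integral_eq_setIntegral_prod hab hcd hF,
    integral_integral_eq_setIntegral_prod hab hcd hG]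
  exact setIntegral_mono_on hF.integrableOn_Ioc_prod_Ioc hG.integrableOn_Ioc_prod_Ioc
    (measurableSet_Ioc.prod measurableSet_Ioc)
    fun p hp => hFG _ (Ioc_subset_Icc_self hp.1) _ (Ioc_subset_Icc_self hp.2)

end Rectangle

theorem integral_integral_sq_norm_le [NormedSpace ℝ E] [CompleteSpace E] {u : ℝ → ℝ → E}
    (hu : ContDiff ℝ 1 (uncurry u)) {a b c d : ℝ} (hab : a ≤ b) (hcd : c ≤ d) :
    ∫ η in a..b, ∫ θ in c..d, ‖u η θ‖ ^ 2
      ≤ 2 * (b - a) * (∫ θ in c..d, ‖u a θ‖ ^ 2)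
        + 2 * (b - a) ^ 2 * ∫ η in a..b, ∫ θ in c..d, ‖deriv (fun s => u s θ) η‖ ^ 2 := by
  have hD : Continuous (uncurry fun θ s => ‖deriv (fun s => u s θ) s‖ ^ 2) :=
    (hu.continuous_deriv_slice_fst.norm.pow 2).comp continuous_swap
  set I : ℝ → ℝ := fun θ => ∫ s in a..b, ‖deriv (fun s => u s θ) s‖ ^ 2
  have hI : Continuous I := continuous_parametric_intervalIntegral_of_continuous' hD a b
  have hua : Continuous fun θ => ‖u a θ‖ ^ 2 :=
    (hu.continuous.comp (continuous_const.prodMk continuous_id)).norm.pow 2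
  calc ∫ η in a..b, ∫ θ in c..d, ‖u η θ‖ ^ 2
      ≤ ∫ η in a..b, ∫ θ in c..d, (2 * ‖u a θ‖ ^ 2 + 2 * (b - a) * I θ) := by
        refine integral_integral_mono_on hab hcd ?_ ?_
          fun η hη θ _ => sq_norm_le_of_contDiff (hu.slice_fst θ) hη.1 hη.2
        · exact (hu.continuous.norm.pow 2).continuousOn
        · exact ((continuous_const.mul (hua.comp continuous_snd)).add
            (continuous_const.mul (hI.comp continuous_snd))).continuousOn
    _ = (b - a) * (2 * (∫ θ in c..d, ‖u a θ‖ ^ 2) + 2 * (b - a) * ∫ θ in c..d, I θ) := by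
        rw [intervalIntegral.integral_const, smul_eq_mul,
          integral_add ((hua.const_mul _).intervalIntegrable _ _)
            ((hI.const_mul _).intervalIntegrable _ _),
          intervalIntegral.integral_const_mul, intervalIntegral.integral_const_mul]
    _ = _ := by
        rw [integral_integral_swap_of_continuousOn hcd hab hD.continuousOn]
        ring

theorem abs_mul_mul_le_of_mem_Icc {h h₀ η k M : ℝ} (hh : 0 ≤ h) (hhh₀ : h ≤ h₀)
    (hη : η ∈ Icc (0 : ℝ) 1) (hk : |k| ≤ M) : |h * η * k| ≤ h₀ * M := by
  rw [abs_mul, abs_mul, abs_of_nonneg hh, abs_of_nonneg hη.1]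
  have hηk : η * |k| ≤ M := (mul_le_of_le_one_left (abs_nonneg k) hη.2).trans hk
  rw [mul_assoc]
  exact mul_le_mul hhh₀ hηk (mul_nonneg hη.1 (abs_nonneg k)) (hh.trans hhh₀)

section Membrane

variable {κ : ℝ → ℝ} {M h₀ h L : ℝ}

theorem integral_integral_membrane_sq_norm_le (hκ : Continuous κ) (hM : ∀ θ, |κ θ| ≤ M)
    (hsmall : h₀ * M < 1) (hh : 0 < h) (hhh₀ : h < h₀) {u : ℝ → ℝ → E}
    (hu : Continuous (uncurry u)) (hL : 0 ≤ L) :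
    ∫ η in (0:ℝ)..1, ∫ θ in (0:ℝ)..L, h * (1 + h * η * κ θ) * ‖u η θ‖ ^ 2
      ≤ 2 * h₀ * ∫ η in (0:ℝ)..1, ∫ θ in (0:ℝ)..L, ‖u η θ‖ ^ 2 := by
  have hWc : Continuous (uncurry fun η θ => 1 + h * η * κ θ) := by fun_prop
  calc ∫ η in (0:ℝ)..1, ∫ θ in (0:ℝ)..L, h * (1 + h * η * κ θ) * ‖u η θ‖ ^ 2
      ≤ ∫ η in (0:ℝ)..1, ∫ θ in (0:ℝ)..L, 2 * h₀ * ‖u η θ‖ ^ 2 := by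
        refine integral_integral_mono_on zero_le_one hL
          (by exact ((continuous_const.mul hWc).mul (hu.norm.pow 2)).continuousOn)
          (by exact (continuous_const.mul (hu.norm.pow 2)).continuousOn)
          fun η hη θ _ => ?_
        have hW := (abs_le.mp (abs_mul_mul_le_of_mem_Icc hh.le hhh₀.le hη (hM θ))).2
        have hhW : h * (1 + h * η * κ θ) ≤ 2 * h₀ := calc
          h * (1 + h * η * κ θ) ≤ h * 2 := by gcongr; linarith
          _ ≤ 2 * h₀ := by linarith
        gcongr
    _ = 2 * h₀ * ∫ η in (0:ℝ)..1, ∫ θ in (0:ℝ)..L, ‖u η θ‖ ^ 2 := by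
        simp only [intervalIntegral.integral_const_mul]

theorem mul_integral_integral_sq_norm_deriv_le (hκ : Continuous κ) (hM : ∀ θ, |κ θ| ≤ M)
    (hsmall : h₀ * M < 1) (hh : 0 < h) (hhh₀ : h < h₀) [NormedSpace ℝ E] {u : ℝ → ℝ → E}
    (hu : ContDiff ℝ 1 (uncurry u)) (hL : 0 ≤ L) :
    (1 - h₀ * M) / h₀ * ∫ η in (0:ℝ)..1, ∫ θ in (0:ℝ)..L, ‖deriv (fun s => u s θ) η‖ ^ 2
      ≤ ∫ η in (0:ℝ)..1, ∫ θ in (0:ℝ)..L,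
          ((1 + h * η * κ θ) / h * ‖deriv (fun s => u s θ) η‖ ^ 2
            + h / (1 + h * η * κ θ) * ‖deriv (u η) θ‖ ^ 2) := by
  have hWlo : ∀ η ∈ Icc (0 : ℝ) 1, ∀ θ, 1 - h₀ * M ≤ 1 + h * η * κ θ := fun η hη θ => by
    linarith [(abs_le.mp (abs_mul_mul_le_of_mem_Icc hh.le hhh₀.le hη (hM θ))).1]
  have hWc : Continuous (uncurry fun η θ => 1 + h * η * κ θ) := by fun_prop
  have hDη := hu.continuous_deriv_slice_fst.norm.pow 2
  have hDθ := hu.continuous_deriv_slice_snd.norm.pow 2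
  have hWne : ∀ p ∈ Icc (0 : ℝ) 1 ×ˢ Icc 0 L, uncurry (fun η θ => 1 + h * η * κ θ) p ≠ 0 :=
    fun p hp => ne_of_gt (lt_of_lt_of_le (by linarith) (hWlo p.1 hp.1 p.2))
  rw [← intervalIntegral.integral_const_mul]
  simp only [← intervalIntegral.integral_const_mul]
  refine integral_integral_mono_on zero_le_one hL (by exact (hDη.const_mul _).continuousOn)
    (((hWc.div_const h).mul hDη).continuousOn.add
      ((continuousOn_const.div hWc.continuousOn hWne).mul hDθ.continuousOn))
    fun η hη θ _ => ?_
  have hcW : (1 - h₀ * M) / h₀ ≤ (1 + h * η * κ θ) / h := calc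
    (1 - h₀ * M) / h₀ ≤ (1 - h₀ * M) / h := div_le_div_of_nonneg_left (by linarith) hh hhh₀.le
    _ ≤ (1 + h * η * κ θ) / h := div_le_div_of_nonneg_right (hWlo η hη θ) hh.le
  calc (1 - h₀ * M) / h₀ * ‖deriv (fun s => u s θ) η‖ ^ 2
      ≤ (1 + h * η * κ θ) / h * ‖deriv (fun s => u s θ) η‖ ^ 2 := by gcongr
    _ ≤ _ := le_add_of_nonneg_right <|
      mul_nonneg (div_nonneg hh.le (by linarith [hWlo η hη θ])) (sq_nonneg _)

end Membrane

theorem stmt3_general (κ : ℝ → ℝ) (hκ : Continuous κ)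
    (M h₀ : ℝ) (hM : ∀ θ, |κ θ| ≤ M) (hh₀ : 0 < h₀) (hsmall : h₀ * M < 1) :
    ∃ C > (0:ℝ), ∀ h : ℝ, 0 < h → h < h₀ → ∀ u : ℝ → ℝ → ℂ,
      ContDiff ℝ 1 (fun p : ℝ × ℝ => u p.1 p.2) →
      (∀ η θ, u η (θ + 2 * π) = u η θ) →
      (∫ η in (0:ℝ)..1, ∫ θ in (0:ℝ)..(2*π), h * (1 + h * η * κ θ) * ‖u η θ‖ ^ 2)
        ≤ C * ((∫ η in (0:ℝ)..1, ∫ θ in (0:ℝ)..(2*π),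
                ((1 + h * η * κ θ) / h * ‖deriv (fun s => u s θ) η‖ ^ 2
                  + h / (1 + h * η * κ θ) * ‖deriv (u η) θ‖ ^ 2))
              + ∫ θ in (0:ℝ)..(2*π), ‖u 0 θ‖ ^ 2) := by
  set c := (1 - h₀ * M) / h₀
  have hc : 0 < c := div_pos (by linarith) hh₀
  refine ⟨4 * h₀ + 4 * h₀ / c, by positivity, fun h hh hhh₀ u hu _ => ?_⟩
  have hR : (0 : ℝ) ≤ 2 * π := two_pi_pos.le
  have hmembrane := integral_integral_membrane_sq_norm_le hκ hM hsmall hh hhh₀ hu.continuous hR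
  have hPoincare := integral_integral_sq_norm_le hu zero_le_one hR
  have hgrad := mul_integral_integral_sq_norm_deriv_le hκ hM hsmall hh hhh₀ hu hR
  simp only [sub_zero, one_pow, mul_one] at hPoincare
  set S := ∫ η in (0:ℝ)..1, ∫ θ in (0:ℝ)..(2*π), ‖deriv (fun s => u s θ) η‖ ^ 2
  set T := ∫ θ in (0:ℝ)..(2*π), ‖u 0 θ‖ ^ 2
  set G := ∫ η in (0:ℝ)..1, ∫ θ in (0:ℝ)..(2*π),
    ((1 + h * η * κ θ) / h * ‖deriv (fun s => u s θ) η‖ ^ 2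
      + h / (1 + h * η * κ θ) * ‖deriv (u η) θ‖ ^ 2)
  have hS : 0 ≤ S := integral_nonneg zero_le_one fun _ _ =>
    integral_nonneg hR fun _ _ => sq_nonneg _
  have hT : 0 ≤ T := integral_nonneg hR fun _ _ => sq_nonneg _
  have hG : 0 ≤ G := (mul_nonneg hc.le hS).trans hgrad
  calc _ ≤ 2 * h₀ * (2 * T + 2 * S) := hmembrane.trans (by gcongr)
    _ = 4 * h₀ * T + 4 * h₀ / c * (c * S) := by field_simp; ring
    _ ≤ 4 * h₀ * T + 4 * h₀ / c * G := by gcongr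
    _ ≤ (4 * h₀ + 4 * h₀ / c) * (G + T) := by
        nlinarith [mul_nonneg (by positivity : (0 : ℝ) ≤ 4 * h₀) hG,
          mul_nonneg (by positivity : (0 : ℝ) ≤ 4 * h₀ / c) hT]

/-- weighted Poincaré-type inequality on the cylinder, uniform in the membrane
thickness `h ∈ (0,h₀)` with `h₀‖κ‖_∞ < 1`: the weighted (membrane) `L²` norm of `u` is
controlled by the weighted norm of its differential and the trace at `η = 0`. -/
theorem stmt3 (κ : ℝ → ℝ) (hκ : Continuous κ) (hκper : ∀ θ, κ (θ + 2 * π) = κ θ)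
    (M h₀ : ℝ) (hM : ∀ θ, |κ θ| ≤ M) (hh₀ : 0 < h₀) (hsmall : h₀ * M < 1) :
    ∃ C > (0:ℝ), ∀ h : ℝ, 0 < h → h < h₀ → ∀ u : ℝ → ℝ → ℂ,
      ContDiff ℝ 1 (fun p : ℝ × ℝ => u p.1 p.2) →
      (∀ η θ, u η (θ + 2 * π) = u η θ) →
      (∫ η in (0:ℝ)..1, ∫ θ in (0:ℝ)..(2*π), h * (1 + h * η * κ θ) * ‖u η θ‖ ^ 2)
        ≤ C * ((∫ η in (0:ℝ)..1, ∫ θ in (0:ℝ)..(2*π),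
                ((1 + h * η * κ θ) / h * ‖deriv (fun s => u s θ) η‖ ^ 2
                  + h / (1 + h * η * κ θ) * ‖deriv (u η) θ‖ ^ 2))
              + ∫ θ in (0:ℝ)..(2*π), ‖u 0 θ‖ ^ 2) :=
  stmt3_general κ hκ M h₀ hM hh₀ hsmall
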